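/- Relative completeness of the double chain algorithm: let π be a template with n parameters and suppose m ≥ 0 satisfies V_{m+1} = V_m and J_{m+1} = J_m. Then J_m is a Φ-invariant containing π[V_m], and for every Φ-invariant I with Z_Φ ∩ π[ℝ^n] ⊆ I one has J_m ⊆ I; that is, J_m is the smallest Φ-invariant containing π[V_m]. -/

import Mathlib

open MvPolynomial

/-- The Lie derivative of a polynomial along the polynomial vector field `F`. -/
noncomputable def lieDeriv {N : ℕ} (F : Fin N → MvPolynomial (Fin N) ℝ)
    (p : MvPolynomial (Fin N) ℝ) : MvPolynomial (Fin N) ℝ :=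
  ∑ i, pderiv i p * F i

/-- `I` is a `Φ`-invariant ideal: every element vanishes at `v₀` and `I` is closed
under Lie derivation. -/
def IsInvariantIdeal {N : ℕ} (F : Fin N → MvPolynomial (Fin N) ℝ) (v₀ : Fin N → ℝ)
    (I : Ideal (MvPolynomial (Fin N) ℝ)) : Prop :=
  (∀ p ∈ I, eval v₀ p = 0) ∧ ∀ p ∈ I, lieDeriv F p ∈ I

/-- `Z_Φ`: the set of polynomials whose induced behaviour vanishes identically on `D`. -/
def Zset {N : ℕ} (x : ℝ → Fin N → ℝ) (D : Set ℝ) : Set (MvPolynomial (Fin N) ℝ) :=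
  {p | ∀ t ∈ D, eval (x t) p = 0}

/-- The vector space `V_i` of parameters `v` such that all Lie derivatives of `π[v]`
up to order `i` vanish at `v₀`. -/
def Vset {N n : ℕ} (F : Fin N → MvPolynomial (Fin N) ℝ) (v₀ : Fin N → ℝ)
    (π : (Fin n → ℝ) →ₗ[ℝ] MvPolynomial (Fin N) ℝ) (i : ℕ) : Set (Fin n → ℝ) :=
  {v | ∀ j ≤ i, eval v₀ ((lieDeriv F)^[j] (π v)) = 0}

/-- The ideal `J_i` generated by `⋃_{j=0}^{i} 𝓛⁽ʲ⁾(π[V_i])`. -/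
noncomputable def Jideal {N n : ℕ} (F : Fin N → MvPolynomial (Fin N) ℝ)
    (v₀ : Fin N → ℝ) (π : (Fin n → ℝ) →ₗ[ℝ] MvPolynomial (Fin N) ℝ) (i : ℕ) :
    Ideal (MvPolynomial (Fin N) ℝ) :=
  Ideal.span {q | ∃ j ≤ i, ∃ v ∈ Vset F v₀ π i, q = (lieDeriv F)^[j] (π v)}

/-!
Once `V_{m+1} = V_m` and `J_{m+1} = J_m`, the ideal `J_m` is closed under `𝓛`: since `𝓛` is a
derivation it suffices to check generators, and `𝓛(𝓛⁽ʲ⁾(π v)) = 𝓛⁽ʲ⁺¹⁾(π v)` is a generator of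
`J_m` for `j < m` and of `J_{m+1} = J_m` for `j = m`. The generators vanish at `v₀` by definition
of `V_m`, so `J_m` is a `Φ`-invariant, and it lies in every `𝓛`-closed ideal containing `π[V_m]`.
For the third claim, every `Φ`-invariant `I` lies in `Z_Φ`: for `p ∈ I` the `j`-th derivative of
`t ↦ p(x(t))` is `𝓛⁽ʲ⁾(p)(x(t))`, which vanishes at `t = 0`, so this analytic function vanishes
on the interval `D`. Hence `π[V_m] ⊆ Z_Φ ∩ π[ℝⁿ]`.
-/

section LieDerivative

variable {N : ℕ} (F : Fin N → MvPolynomial (Fin N) ℝ)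

noncomputable def lieDerivation : Derivation ℝ (MvPolynomial (Fin N) ℝ) (MvPolynomial (Fin N) ℝ) :=
  ∑ i, F i • pderiv i

theorem coe_lieDerivation : ⇑(lieDerivation F) = lieDeriv F := by
  ext1 p
  rw [lieDerivation, ← Derivation.coeFnAddMonoidHom_apply, map_sum, Finset.sum_apply, lieDeriv]
  simp [mul_comm]

theorem lieDeriv_X (i : Fin N) : lieDeriv F (X i) = F i := by
  rw [lieDeriv, Finset.sum_eq_single i] <;> simp_all [pderiv_X]

theorem lieDeriv_mul (p q : MvPolynomial (Fin N) ℝ) :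
    lieDeriv F (p * q) = p * lieDeriv F q + q * lieDeriv F p := by
  simp only [← coe_lieDerivation, Derivation.leibniz, smul_eq_mul]

end LieDerivative

theorem Derivation.mapsTo_span {R A : Type*} [CommSemiring R] [CommSemiring A] [Algebra R A]
    (d : Derivation R A A) {S : Set A} (hS : Set.MapsTo d S (Ideal.span S)) :
    Set.MapsTo d (Ideal.span S) (Ideal.span S) := by
  intro p hp
  induction hp using Submodule.span_induction with
  | mem s hs => exact hS hs
  | zero => simp
  | add a b _ _ ha hb => simpa using Ideal.add_mem _ ha hb
  | smul a b hb hdb =>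
    rw [smul_eq_mul, Derivation.leibniz]
    exact Ideal.add_mem _ (Ideal.mul_mem_left _ a hdb) (Ideal.mul_mem_right _ _ hb)

theorem AnalyticOnNhd.eqOn_zero_of_iteratedDeriv_eq_zero {𝕜 E : Type*} [NontriviallyNormedField 𝕜]
    [CharZero 𝕜] [NormedAddCommGroup E] [NormedSpace 𝕜 E] [CompleteSpace E] {f : 𝕜 → E}
    {U : Set 𝕜} {z₀ : 𝕜} (hf : AnalyticOnNhd 𝕜 f U) (hU : IsPreconnected U) (h₀ : z₀ ∈ U)
    (h : ∀ n, iteratedDeriv n f z₀ = 0) : Set.EqOn f 0 U := by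
  have hord : analyticOrderAt f z₀ = ⊤ := ENat.eq_top_iff_forall_ge.2 fun n ↦
    (natCast_le_analyticOrderAt_iff_iteratedDeriv_eq_zero (hf z₀ h₀)).2 fun i _ ↦ h i
  exact hf.eqOn_zero_of_preconnected_of_eventuallyEq_zero hU h₀ (analyticOrderAt_eq_top.1 hord)

section Trajectory

variable {N : ℕ} {F : Fin N → MvPolynomial (Fin N) ℝ} {x : ℝ → Fin N → ℝ}

theorem hasDerivAt_eval_lieDeriv {t : ℝ} (hx : HasDerivAt x (fun i ↦ eval (x t) (F i)) t)
    (p : MvPolynomial (Fin N) ℝ) :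
    HasDerivAt (fun s ↦ eval (x s) p) (eval (x t) (lieDeriv F p)) t := by
  induction p using MvPolynomial.induction_on with
  | C r => simpa [lieDeriv] using hasDerivAt_const t r
  | add p q hp hq =>
    simp only [← coe_lieDerivation, map_add] at hp hq ⊢
    exact hp.fun_add hq
  | mul_X p i hp =>
    simp only [lieDeriv_mul, lieDeriv_X, map_add, map_mul, eval_X]
    exact (hp.fun_mul (hasDerivAt_pi.1 hx i)).congr_deriv (by ring)

theorem eqOn_iteratedDeriv_eval {D : Set ℝ} (hD : IsOpen D)
    (hsol : ∀ t ∈ D, HasDerivAt x (fun i ↦ eval (x t) (F i)) t) (p : MvPolynomial (Fin N) ℝ)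
    (j : ℕ) :
    Set.EqOn (iteratedDeriv j fun s ↦ eval (x s) p)
      (fun t ↦ eval (x t) ((lieDeriv F)^[j] p)) D := by
  induction j with
  | zero => exact fun t _ ↦ rfl
  | succ j ih =>
    intro t ht
    rw [iteratedDeriv_succ, Function.iterate_succ_apply',
      (Filter.eventuallyEq_of_mem (hD.mem_nhds ht) ih).deriv_eq]
    exact (hasDerivAt_eval_lieDeriv (hsol t ht) _).deriv

theorem IsInvariantIdeal.subset_Zset {v₀ : Fin N → ℝ} {I : Ideal (MvPolynomial (Fin N) ℝ)}
    (hI : IsInvariantIdeal F v₀ I) {D : Set ℝ} (hD : IsOpen D) (hDc : D.OrdConnected)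
    (h0 : (0 : ℝ) ∈ D) (hsol : ∀ t ∈ D, HasDerivAt x (fun i ↦ eval (x t) (F i)) t)
    (hx0 : x 0 = v₀) (han : ∀ i, AnalyticOnNhd ℝ (fun t ↦ x t i) D) :
    (I : Set (MvPolynomial (Fin N) ℝ)) ⊆ Zset x D := by
  intro p hp
  have han_p : AnalyticOnNhd ℝ (fun t ↦ eval (x t) p) D := by
    simpa [coe_aeval_eq_eval] using AnalyticOnNhd.aeval_mvPolynomial (A := ℝ) han p
  refine han_p.eqOn_zero_of_iteratedDeriv_eq_zero hDc.isPreconnected h0 fun j ↦ ?_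
  simp only [eqOn_iteratedDeriv_eval hD hsol p j h0, hx0]
  exact hI.1 _ (Set.MapsTo.iterate (fun q hq ↦ hI.2 q hq) j hp)

end Trajectory

section DoubleChain

variable {N n : ℕ} {F : Fin N → MvPolynomial (Fin N) ℝ} {v₀ : Fin N → ℝ}
  {π : (Fin n → ℝ) →ₗ[ℝ] MvPolynomial (Fin N) ℝ}

theorem image_Vset_subset_Jideal (i : ℕ) :
    π '' Vset F v₀ π i ⊆ (Jideal F v₀ π i : Set (MvPolynomial (Fin N) ℝ)) := by
  rintro _ ⟨v, hv, rfl⟩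
  exact Ideal.subset_span ⟨0, i.zero_le, v, hv, rfl⟩

theorem Jideal_le_ker_eval (i : ℕ) : Jideal F v₀ π i ≤ RingHom.ker (eval v₀) := by
  rw [Jideal, Ideal.span_le]
  rintro _ ⟨j, hj, v, hv, rfl⟩
  exact hv j hj

theorem Jideal_le_of_image_subset {I : Ideal (MvPolynomial (Fin N) ℝ)} {i : ℕ}
    (hI : Set.MapsTo (lieDeriv F) I I) (hπ : π '' Vset F v₀ π i ⊆ I) : Jideal F v₀ π i ≤ I := by
  rw [Jideal, Ideal.span_le]
  rintro _ ⟨j, -, v, hv, rfl⟩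
  exact hI.iterate j (hπ ⟨v, hv, rfl⟩)

theorem mapsTo_lieDeriv_Jideal {m : ℕ} (hV : Vset F v₀ π (m + 1) = Vset F v₀ π m)
    (hJ : Jideal F v₀ π (m + 1) = Jideal F v₀ π m) :
    Set.MapsTo (lieDeriv F) (Jideal F v₀ π m) (Jideal F v₀ π m) := by
  rw [← coe_lieDerivation, Jideal]
  refine Derivation.mapsTo_span _ ?_
  rintro _ ⟨j, hj, v, hv, rfl⟩
  rw [coe_lieDerivation, ← Function.iterate_succ_apply' (lieDeriv F)]
  rcases hj.lt_or_eq with hj | rfl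
  · exact Ideal.subset_span ⟨j + 1, hj, v, hv, rfl⟩
  · rw [← Jideal, ← hJ]
    exact Ideal.subset_span ⟨j + 1, le_rfl, v, hV ▸ hv, rfl⟩

theorem isInvariantIdeal_Jideal {m : ℕ} (hV : Vset F v₀ π (m + 1) = Vset F v₀ π m)
    (hJ : Jideal F v₀ π (m + 1) = Jideal F v₀ π m) :
    IsInvariantIdeal F v₀ (Jideal F v₀ π m) :=
  ⟨fun _ hp ↦ Jideal_le_ker_eval m hp, fun _ hp ↦ mapsTo_lieDeriv_Jideal hV hJ hp⟩

end DoubleChain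

theorem stmt11_general
    (N n : ℕ)
    (F : Fin N → MvPolynomial (Fin N) ℝ) (v₀ : Fin N → ℝ)
    (D : Set ℝ) (hD : IsOpen D) (hDc : D.OrdConnected) (h0 : (0 : ℝ) ∈ D)
    (x : ℝ → Fin N → ℝ)
    (hsol : ∀ t ∈ D, HasDerivAt x (fun i => eval (x t) (F i)) t)
    (hx0 : x 0 = v₀)
    (han : ∀ i, AnalyticOnNhd ℝ (fun t => x t i) D)
    (π : (Fin n → ℝ) →ₗ[ℝ] MvPolynomial (Fin N) ℝ) (m : ℕ)
    (hV : Vset F v₀ π (m + 1) = Vset F v₀ π m)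
    (hJ : Jideal F v₀ π (m + 1) = Jideal F v₀ π m) :
    IsInvariantIdeal F v₀ (Jideal F v₀ π m) ∧
    ⇑π '' Vset F v₀ π m ⊆ (Jideal F v₀ π m : Set (MvPolynomial (Fin N) ℝ)) ∧
    (∀ I : Ideal (MvPolynomial (Fin N) ℝ), IsInvariantIdeal F v₀ I →
      Zset x D ∩ Set.range ⇑π ⊆ (I : Set (MvPolynomial (Fin N) ℝ)) →
      Jideal F v₀ π m ≤ I) ∧
    (∀ I : Ideal (MvPolynomial (Fin N) ℝ), IsInvariantIdeal F v₀ I →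
      ⇑π '' Vset F v₀ π m ⊆ (I : Set (MvPolynomial (Fin N) ℝ)) →
      Jideal F v₀ π m ≤ I) := by
  have hinv := isInvariantIdeal_Jideal hV hJ
  have hmin (I : Ideal (MvPolynomial (Fin N) ℝ)) (hI : IsInvariantIdeal F v₀ I)
      (hπ : ⇑π '' Vset F v₀ π m ⊆ I) : Jideal F v₀ π m ≤ I :=
    Jideal_le_of_image_subset (fun p hp ↦ hI.2 p hp) hπ
  refine ⟨hinv, image_Vset_subset_Jideal m, fun I hI hZ ↦ hmin I hI ?_, hmin⟩
  rintro _ ⟨v, hv, rfl⟩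
  have hπv := image_Vset_subset_Jideal m ⟨v, hv, rfl⟩
  exact hZ ⟨hinv.subset_Zset hD hDc h0 hsol hx0 han hπv, v, rfl⟩

/-- relative completeness of the double chain algorithm: if
`V_{m+1} = V_m` and `J_{m+1} = J_m`, then `J_m` is a `Φ`-invariant containing
`π[V_m]`, every `Φ`-invariant containing `Z_Φ ∩ π[ℝⁿ]` contains `J_m`, and `J_m`
is the smallest `Φ`-invariant containing `π[V_m]`. -/
theorem stmt11
    (N n : ℕ) (hN : 1 ≤ N)
    (F : Fin N → MvPolynomial (Fin N) ℝ) (v₀ : Fin N → ℝ)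
    (D : Set ℝ) (hD : IsOpen D) (hDc : D.OrdConnected) (h0 : (0 : ℝ) ∈ D)
    (x : ℝ → Fin N → ℝ)
    (hsol : ∀ t ∈ D, HasDerivAt x (fun i => eval (x t) (F i)) t)
    (hx0 : x 0 = v₀)
    (han : ∀ i, AnalyticOnNhd ℝ (fun t => x t i) D)
    (π : (Fin n → ℝ) →ₗ[ℝ] MvPolynomial (Fin N) ℝ) (m : ℕ)
    (hV : Vset F v₀ π (m + 1) = Vset F v₀ π m)
    (hJ : Jideal F v₀ π (m + 1) = Jideal F v₀ π m) :
    IsInvariantIdeal F v₀ (Jideal F v₀ π m) ∧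
    ⇑π '' Vset F v₀ π m ⊆ (Jideal F v₀ π m : Set (MvPolynomial (Fin N) ℝ)) ∧
    (∀ I : Ideal (MvPolynomial (Fin N) ℝ), IsInvariantIdeal F v₀ I →
      Zset x D ∩ Set.range ⇑π ⊆ (I : Set (MvPolynomial (Fin N) ℝ)) →
      Jideal F v₀ π m ≤ I) ∧
    (∀ I : Ideal (MvPolynomial (Fin N) ℝ), IsInvariantIdeal F v₀ I →
      ⇑π '' Vset F v₀ π m ⊆ (I : Set (MvPolynomial (Fin N) ℝ)) →
      Jideal F v₀ π m ≤ I) :=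
  stmt11_general N n F v₀ D hD hDc h0 x hsol hx0 han π m hV hJ
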